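/- arXiv:2111.01848 — 2 statements merged into one kernel-verified Lean document; each statement's English description precedes it below -/
import Mathlib

section
/- Let A be a real n×d matrix of full column rank with rows a_1,…,a_n, and let p ≥ 2. For each i ∈ [n], the function φ_i : ℝ^n_{>0} → ℝ defined by φ_i(v) = log( v_i^{−2/p} · a_i^⊤ (A^⊤ diag(v)^{1−2/p} A)^{−1} a_i ) is convex on the open positive orthant { v ∈ ℝ^n : v_j > 0 for all j }, provided a_i ≠ 0 (so that the argument of the logarithm is positive). -/
/-!
Write `M(v) = Aᵀ diag(v^α) A` with `α = 1 - 2/p ∈ [0, 1)` and `F(v) = aᵢᵀ M(v)⁻¹ aᵢ`. The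
function splits as `-(2/p) log vᵢ + log F(v)`, and the first summand is convex. For the second,
Cauchy–Schwarz in the inner product of `M(v)` gives the variational formula
`log F(v) = max_{aᵢ·x ≠ 0} (log (aᵢ·x)² - log (xᵀ M(v) x))`, attained at `x = M(v)⁻¹ aᵢ`.
Since `v ↦ xᵀ M(v) x = ∑ⱼ (A x)ⱼ² vⱼ^α` is concave and positive, each function in the maximum
is convex, hence so is `log F`.
-/

open Matrix

theorem ConcaveOn.sum {𝕜 E ι β : Type*} [Semiring 𝕜] [PartialOrder 𝕜] [AddCommMonoid E]
    [AddCommMonoid β] [PartialOrder β] [IsOrderedAddMonoid β] [SMul 𝕜 E] [Module 𝕜 β]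
    {s : Set E} (hs : Convex 𝕜 s) {f : ι → E → β} {t : Finset ι}
    (hf : ∀ i ∈ t, ConcaveOn 𝕜 s (f i)) : ConcaveOn 𝕜 s fun x => ∑ i ∈ t, f i x := by
  classical
  induction t using Finset.induction_on with
  | empty => simpa using concaveOn_const (0 : β) hs
  | insert j t hj ih =>
    simp only [Finset.sum_insert hj]
    exact (hf j (t.mem_insert_self j)).add (ih fun i hi => hf i (Finset.mem_insert_of_mem hi))

theorem ConcaveOn.log {E : Type*} [AddCommMonoid E] [Module ℝ E] {s : Set E} {f : E → ℝ}
    (hf : ConcaveOn ℝ s f) (hpos : ∀ x ∈ s, 0 < f x) : ConcaveOn ℝ s fun x => Real.log (f x) :=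
  ⟨hf.1, fun x hx y hy _ _ ha hb hab =>
    (strictConcaveOn_log_Ioi.concaveOn.2 (hpos x hx) (hpos y hy) ha hb hab).trans <|
      Real.log_le_log (convex_Ioi (0 : ℝ) (hpos x hx) (hpos y hy) ha hb hab)
        (hf.2 hx hy ha hb hab)⟩

theorem ConvexOn.of_forall_le_of_exists_eq {𝕜 E β ι : Type*} [Semiring 𝕜] [PartialOrder 𝕜]
    [AddCommMonoid E] [AddCommMonoid β] [PartialOrder β] [IsOrderedAddMonoid β] [SMul 𝕜 E]
    [Module 𝕜 β] [PosSMulMono 𝕜 β] {s : Set E} (hs : Convex 𝕜 s) {f : E → β} {g : ι → E → β}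
    (hg : ∀ i, ConvexOn 𝕜 s (g i)) (hle : ∀ i, ∀ x ∈ s, g i x ≤ f x)
    (hattain : ∀ x ∈ s, ∃ i, g i x = f x) : ConvexOn 𝕜 s f := by
  refine ⟨hs, fun x hx y hy a b ha hb hab => ?_⟩
  obtain ⟨i, hi⟩ := hattain _ (hs hx hy ha hb hab)
  calc f (a • x + b • y) = g i (a • x + b • y) := hi.symm
    _ ≤ a • g i x + b • g i y := (hg i).2 hx hy ha hb hab
    _ ≤ a • f x + b • f y := by gcongr <;> exact hle i _ ‹_›

section PositiveOrthant

variable {ι : Type*}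

theorem convex_setOf_forall_pos : Convex ℝ {v : ι → ℝ | ∀ j, 0 < v j} :=
  fun v hv w hw a b ha hb hab j => by simpa using convex_Ioi (0 : ℝ) (hv j) (hw j) ha hb hab

theorem concaveOn_log_apply (i : ι) :
    ConcaveOn ℝ {v : ι → ℝ | ∀ j, 0 < v j} fun v => Real.log (v i) :=
  (strictConcaveOn_log_Ioi.concaveOn.comp_linearMap (LinearMap.proj (φ := fun _ : ι => ℝ) i)).subset
    (fun _ hv => hv i) convex_setOf_forall_pos

theorem concaveOn_sum_mul_rpow [Fintype ι] {c : ι → ℝ} (hc : ∀ j, 0 ≤ c j) {α : ℝ}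
    (hα₀ : 0 ≤ α) (hα₁ : α ≤ 1) :
    ConcaveOn ℝ {v : ι → ℝ | ∀ j, 0 < v j} fun v => ∑ j, c j * v j ^ α :=
  ConcaveOn.sum convex_setOf_forall_pos fun j _ =>
    (((Real.concaveOn_rpow hα₀ hα₁).comp_linearMap (LinearMap.proj j)).subset
      (fun _ hv => (hv j).le) convex_setOf_forall_pos).smul (hc j)

end PositiveOrthant

namespace Matrix

theorem mulVec_injective_of_rank_eq_card {K m n : Type*} [Field K] [Fintype n]
    {A : Matrix m n K} (hA : A.rank = Fintype.card n) : Function.Injective A.mulVec := by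
  have hker : Module.finrank K (LinearMap.ker A.mulVecLin) = 0 := by
    have := LinearMap.finrank_range_add_finrank_ker A.mulVecLin
    rw [Module.finrank_fintype_fun_eq_card, ← rank, hA] at this
    omega
  rw [← coe_mulVecLin, ← LinearMap.ker_eq_bot]
  exact Submodule.finrank_eq_zero.mp hker

variable {m : Type*} [Fintype m]

theorem PosSemidef.dotProduct_mulVec_sq_le {M : Matrix m m ℝ} (hM : M.PosSemidef)
    (x y : m → ℝ) : (x ⬝ᵥ M *ᵥ y) ^ 2 ≤ (x ⬝ᵥ M *ᵥ x) * (y ⬝ᵥ M *ᵥ y) := by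
  have hsymm : y ⬝ᵥ M *ᵥ x = x ⬝ᵥ M *ᵥ y := by
    rw [dotProduct_mulVec, ← mulVec_transpose, dotProduct_comm,
      ← conjTranspose_eq_transpose_of_trivial, hM.isHermitian.eq]
  have hquad : ∀ t : ℝ,
      0 ≤ (y ⬝ᵥ M *ᵥ y) * (t * t) + 2 * (x ⬝ᵥ M *ᵥ y) * t + x ⬝ᵥ M *ᵥ x := by
    intro t
    have := hM.dotProduct_mulVec_nonneg (x + t • y)
    simp only [star_trivial, mulVec_add, mulVec_smul, dotProduct_add, add_dotProduct,
      dotProduct_smul, smul_dotProduct, hsymm, smul_eq_mul] at this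
    linarith
  have := discrim_le_zero hquad
  rw [discrim] at this
  linarith

variable [DecidableEq m]

theorem dotProduct_transpose_mul_diagonal_mul_mulVec {n R : Type*} [Fintype n] [CommRing R]
    (A : Matrix m n R) (w : m → R) (x : n → R) :
    x ⬝ᵥ (Aᵀ * diagonal w * A) *ᵥ x = ∑ j, (A *ᵥ x) j ^ 2 * w j := by
  rw [← mulVec_mulVec, ← mulVec_mulVec, dotProduct_mulVec, vecMul_transpose]
  simp only [dotProduct, mulVec_diagonal]
  exact Finset.sum_congr rfl fun j _ => by ring

theorem posDef_transpose_mul_diagonal_mul {n : Type*} [Fintype n] {A : Matrix m n ℝ}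
    (hA : Function.Injective A.mulVec) {w : m → ℝ} (hw : ∀ j, 0 < w j) :
    (Aᵀ * diagonal w * A).PosDef := by
  simpa only [conjTranspose_eq_transpose_of_trivial] using (PosDef.diagonal hw).conjTranspose_mul_mul_same hA

theorem PosDef.mulVec_inv_mulVec {M : Matrix m m ℝ} (hM : M.PosDef) (a : m → ℝ) :
    M *ᵥ (M⁻¹ *ᵥ a) = a := by
  rw [mulVec_mulVec, mul_nonsing_inv _ ((isUnit_iff_isUnit_det M).mp hM.isUnit), one_mulVec]

theorem PosDef.dotProduct_mulVec_inv_mulVec {M : Matrix m m ℝ} (hM : M.PosDef) (a : m → ℝ) :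
    (M⁻¹ *ᵥ a) ⬝ᵥ M *ᵥ (M⁻¹ *ᵥ a) = a ⬝ᵥ M⁻¹ *ᵥ a := by
  rw [hM.mulVec_inv_mulVec, dotProduct_comm]

theorem PosDef.dotProduct_sq_le {M : Matrix m m ℝ} (hM : M.PosDef) (a x : m → ℝ) :
    (a ⬝ᵥ x) ^ 2 ≤ (a ⬝ᵥ M⁻¹ *ᵥ a) * (x ⬝ᵥ M *ᵥ x) := by
  have h := hM.posSemidef.dotProduct_mulVec_sq_le x (M⁻¹ *ᵥ a)
  rwa [hM.dotProduct_mulVec_inv_mulVec, hM.mulVec_inv_mulVec, dotProduct_comm x, mul_comm] at h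

theorem convexOn_log_dotProduct_inv_mulVec {E : Type*} [AddCommGroup E] [Module ℝ E]
    {s : Set E} {M : E → Matrix m m ℝ} (hM : ∀ v ∈ s, (M v).PosDef)
    (hconc : ∀ x, ConcaveOn ℝ s fun v => x ⬝ᵥ M v *ᵥ x) {a : m → ℝ} (ha : a ≠ 0) :
    ConvexOn ℝ s fun v => Real.log (a ⬝ᵥ (M v)⁻¹ *ᵥ a) := by
  have hquad_pos : ∀ v ∈ s, ∀ x : m → ℝ, a ⬝ᵥ x ≠ 0 → 0 < x ⬝ᵥ M v *ᵥ x := fun v hv x hx => by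
    simpa using (hM v hv).dotProduct_mulVec_pos (x := x) (by rintro rfl; simp at hx)
  have hinv_pos : ∀ v ∈ s, 0 < a ⬝ᵥ (M v)⁻¹ *ᵥ a := fun v hv => by
    simpa using (hM v hv).inv.dotProduct_mulVec_pos ha
  -- Excluding `a ⬝ᵥ x = 0` avoids the junk value `Real.log 0 = 0`, which would break `g x ≤ f`.
  refine ConvexOn.of_forall_le_of_exists_eq (hconc 0).1
    (g := fun (x : {x : m → ℝ // a ⬝ᵥ x ≠ 0}) v =>
      Real.log ((a ⬝ᵥ x) ^ 2) - Real.log ((x : m → ℝ) ⬝ᵥ M v *ᵥ x)) ?_ ?_ ?_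
  · rintro ⟨x, hx⟩
    exact (convexOn_const _ (hconc 0).1).sub ((hconc x).log fun v hv => hquad_pos v hv x hx)
  · rintro ⟨x, hx⟩ v hv
    rw [sub_le_iff_le_add, ← Real.log_mul (hinv_pos v hv).ne' (hquad_pos v hv x hx).ne']
    exact Real.log_le_log (by positivity) ((hM v hv).dotProduct_sq_le a x)
  · intro v hv
    refine ⟨⟨(M v)⁻¹ *ᵥ a, (hinv_pos v hv).ne'⟩, ?_⟩
    dsimp only
    rw [(hM v hv).dotProduct_mulVec_inv_mulVec, Real.log_pow]
    push_cast
    ring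

end Matrix

theorem stmt16 {n d : ℕ} (A : Matrix (Fin n) (Fin d) ℝ) (hA : A.rank = d)
    (p : ℝ) (hp : 2 ≤ p) (i : Fin n) (hai : A i ≠ 0) :
    ConvexOn ℝ {v : Fin n → ℝ | ∀ j, 0 < v j}
      (fun v : Fin n → ℝ => Real.log ((v i) ^ (-(2/p)) *
        (A i ⬝ᵥ ((Aᵀ * Matrix.diagonal (fun j => v j ^ (1 - 2/p)) * A)⁻¹ *ᵥ A i)))) := by
  have hp₀ : 0 < 2 / p := by positivity
  have hp₁ : 2 / p ≤ 1 := (div_le_one (by linarith)).mpr hp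
  have hinj : Function.Injective A.mulVec := mulVec_injective_of_rank_eq_card (by simpa using hA)
  have hM : ∀ v : Fin n → ℝ, (∀ j, 0 < v j) →
      (Aᵀ * diagonal (fun j => v j ^ (1 - 2 / p)) * A).PosDef := fun v hv =>
    posDef_transpose_mul_diagonal_mul hinj fun j => Real.rpow_pos_of_pos (hv j) _
  have hlog_quad := convexOn_log_dotProduct_inv_mulVec (s := {v : Fin n → ℝ | ∀ j, 0 < v j}) hM
    (fun x => by
      simpa only [dotProduct_transpose_mul_diagonal_mul_mulVec] using
        concaveOn_sum_mul_rpow (fun j => sq_nonneg ((A *ᵥ x) j)) (by linarith) (by linarith))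
    hai
  have hlog_coord : ConvexOn ℝ {v : Fin n → ℝ | ∀ j, 0 < v j} fun v => (2 / p) • -Real.log (v i) :=
    (concaveOn_log_apply i).neg.smul hp₀.le
  refine (hlog_coord.add hlog_quad).congr fun v hv => ?_
  have hquad : 0 < A i ⬝ᵥ (Aᵀ * diagonal (fun j => v j ^ (1 - 2 / p)) * A)⁻¹ *ᵥ A i := by
    simpa using (hM v hv).inv.dotProduct_mulVec_pos hai
  simp only [Pi.add_apply, smul_eq_mul]
  rw [Real.log_mul (Real.rpow_pos_of_pos (hv i) _).ne' hquad.ne', Real.log_rpow (hv i)]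
  ring
end

section
/- Let A be a real n×d matrix of full column rank, 1 ≤ q ≤ 2, and c ∈ ℝ^n nonnegative. Let w ∈ ℝ^n be nonnegative with c + w entrywise positive and satisfying the fixed-point equation w_i = σ((C+W)^{1/2−1/q}A)_i for all i, where C = diag(c) and W = diag(w). Let u ∈ ℝ^n be nonnegative with c + u entrywise positive, let ν ≥ 1 satisfy ν^{−1}(c_i + w_i) ≤ c_i + u_i ≤ ν(c_i + w_i) for all i, and let σ̃ ∈ ℝ^n satisfy (50/51)·σ((C+U)^{1/2−1/q}A)_i ≤ σ̃_i ≤ (51/50)·σ((C+U)^{1/2−1/q}A)_i for all i, where U = diag(u). Define u^new ∈ ℝ^n by u^new_i = ( (c_i+u_i)^{2/q−1}σ̃_i + (c_i+u_i)^{2/q−1}c_i )^{q/2} − c_i. Then, with μ = (51/50)^{q/2}·ν^{1−q/2}, for all i: μ^{−1}(c_i + w_i) ≤ c_i + u^new_i ≤ μ(c_i + w_i). -/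
/-!
Put `t = 2/q - 1 ≥ 0`. The leverage score of `diag(x^(1/2 - 1/q)) A` at `i` is
`x_i^(-t) · a_iᵀ (Aᵀ diag(x^(-t)) A)⁻¹ a_i`, so the fixed-point equation says
`(c_i + w_i)^t w_i = a_iᵀ (Aᵀ diag((c + w)^(-t)) A)⁻¹ a_i`. A `ν`-approximation `c + u ≈ c + w`
gives a `ν^t`-approximation of the diagonal weights, hence of the Gram matrices in the Loewner
order, and inversion preserves it through `xᵀ P⁻¹ x = max_v (2 vᵀx - vᵀ P v)`. Adding the term
`(c_i + u_i)^t c_i` and the `51/50` error of `σ̃`, the base of the power defining `c_i + u^new_i`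
approximates `(c_i + w_i)^(t+1)` within `(51/50) ν^t`, and raising to `q/2 = 1/(t+1)` gives `μ`.
-/

open Matrix

/-- Leverage score of row `i` of matrix `M`: `σ(M)_i = m_i^⊤ (M^⊤ M)⁻¹ m_i`. -/
noncomputable def levScore {n d : ℕ} (M : Matrix (Fin n) (Fin d) ℝ) (i : Fin n) : ℝ :=
  M i ⬝ᵥ ((Mᵀ * M)⁻¹ *ᵥ M i)

def MulApprox (a x y : ℝ) : Prop := a⁻¹ * x ≤ y ∧ y ≤ a * x

namespace MulApprox

variable {a b k p x y z x' y' : ℝ}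

theorem iff_le_mul (ha : 0 < a) : MulApprox a x y ↔ x ≤ a * y ∧ y ≤ a * x := by
  rw [MulApprox, inv_mul_le_iff₀ ha]

theorem trans (hb : 0 ≤ b) (hxy : MulApprox a x y) (hyz : MulApprox b y z) :
    MulApprox (a * b) x z := by
  constructor
  · calc (a * b)⁻¹ * x = b⁻¹ * (a⁻¹ * x) := by rw [mul_inv, mul_comm a⁻¹, mul_assoc]
      _ ≤ b⁻¹ * y := by gcongr; exact hxy.1
      _ ≤ z := hyz.1
  · calc z ≤ b * y := hyz.2
      _ ≤ b * (a * x) := by gcongr; exact hxy.2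
      _ = a * b * x := by ring

theorem add (h : MulApprox a x y) (h' : MulApprox a x' y') :
    MulApprox a (x + x') (y + y') :=
  ⟨by linear_combination h.1 + h'.1, by linear_combination h.2 + h'.2⟩

theorem mul_left (hk : 0 ≤ k) (h : MulApprox a x y) : MulApprox a (k * x) (k * y) := by
  simp only [MulApprox, mul_left_comm _ k]
  exact ⟨mul_le_mul_of_nonneg_left h.1 hk, mul_le_mul_of_nonneg_left h.2 hk⟩

theorem mul_right (hk : 0 ≤ k) (h : MulApprox a x y) : MulApprox a (x * k) (y * k) := by
  simpa only [mul_comm _ k] using h.mul_left hk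

theorem mono (ha : 0 < a) (hab : a ≤ b) (hx : 0 ≤ x) (h : MulApprox a x y) :
    MulApprox b x y :=
  ⟨le_trans (by gcongr) h.1, h.2.trans (by gcongr)⟩

theorem inv (ha : 0 < a) (hx : 0 < x) (hy : 0 < y) (h : MulApprox a x y) :
    MulApprox a x⁻¹ y⁻¹ := by
  constructor
  · rw [← mul_inv]; exact inv_anti₀ hy h.2
  · rw [← inv_inv a, ← mul_inv]; exact inv_anti₀ (by positivity) h.1

theorem rpow (ha : 0 ≤ a) (hx : 0 ≤ x) (hp : 0 ≤ p) (h : MulApprox a x y) :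
    MulApprox (a ^ p) (x ^ p) (y ^ p) := by
  have hax : 0 ≤ a⁻¹ * x := by positivity
  constructor
  · rw [← Real.inv_rpow ha, ← Real.mul_rpow (inv_nonneg.2 ha) hx]
    exact Real.rpow_le_rpow hax h.1 hp
  · rw [← Real.mul_rpow ha hx]
    exact Real.rpow_le_rpow (hax.trans h.1) h.2 hp

end MulApprox

section GramInverse

variable {ι m : Type*} [Fintype m]

theorem Matrix.mulVec_injective_of_rank_eq_card_s17 {K : Type*} [Field K] (A : Matrix ι m K)
    (hA : A.rank = Fintype.card m) : Function.Injective A.mulVec := by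
  have hker : Module.finrank K (LinearMap.ker A.mulVecLin) = 0 := by
    have := A.mulVecLin.finrank_range_add_finrank_ker
    rw [← Matrix.rank, hA, Module.finrank_fintype_fun_eq_card] at this
    omega
  rw [Submodule.finrank_eq_zero, LinearMap.ker_eq_bot] at hker
  exact hker

section Diagonal

variable [Fintype ι] [DecidableEq ι]

theorem Matrix.dotProduct_transpose_mul_diagonal_mul_mulVec_s17 (A : Matrix ι m ℝ) (s : ι → ℝ)
    (v : m → ℝ) : v ⬝ᵥ ((Aᵀ * diagonal s * A) *ᵥ v) = ∑ j, s j * (A *ᵥ v) j ^ 2 := by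
  rw [← mulVec_mulVec, ← mulVec_mulVec, dotProduct_mulVec, vecMul_transpose]
  simp only [dotProduct, mulVec_diagonal]
  exact Finset.sum_congr rfl fun j _ => by ring

theorem Matrix.posDef_transpose_mul_diagonal_mul_s17 {A : Matrix ι m ℝ}
    (hA : Function.Injective A.mulVec) {s : ι → ℝ} (hs : ∀ j, 0 < s j) :
    (Aᵀ * diagonal s * A).PosDef := by
  simpa only [conjTranspose_eq_transpose_of_trivial] using
    (posDef_diagonal_iff.2 hs).conjTranspose_mul_mul_same hA

end Diagonal

variable [DecidableEq m]

theorem Matrix.PosDef.two_mul_dotProduct_sub_le {P : Matrix m m ℝ} (hP : P.PosDef)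
    (x v : m → ℝ) : 2 * (v ⬝ᵥ x) - v ⬝ᵥ (P *ᵥ v) ≤ x ⬝ᵥ (P⁻¹ *ᵥ x) := by
  set p := P⁻¹ *ᵥ x
  have hPp : P *ᵥ p = x := by
    rw [mulVec_mulVec, mul_nonsing_inv _ hP.det_pos.ne'.isUnit, one_mulVec]
  have hPt : Pᵀ = P := by
    simpa only [conjTranspose_eq_transpose_of_trivial] using hP.isHermitian.eq
  have hsymm : p ⬝ᵥ (P *ᵥ v) = v ⬝ᵥ x := by
    rw [dotProduct_mulVec, ← mulVec_transpose, hPt, hPp, dotProduct_comm]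
  have hnonneg := hP.posSemidef.dotProduct_mulVec_nonneg (p - v)
  simp only [star_trivial, mulVec_sub, sub_dotProduct, dotProduct_sub, hPp, hsymm] at hnonneg
  rw [dotProduct_comm x p]
  linarith

theorem Matrix.PosDef.dotProduct_inv_mulVec_le {P Q : Matrix m m ℝ} (hP : P.PosDef)
    (hQ : IsUnit Q.det) {γ : ℝ} (hγ : 0 < γ) (hPQ : ∀ v, v ⬝ᵥ (P *ᵥ v) ≤ γ * (v ⬝ᵥ (Q *ᵥ v)))
    (x : m → ℝ) : x ⬝ᵥ (Q⁻¹ *ᵥ x) ≤ γ * (x ⬝ᵥ (P⁻¹ *ᵥ x)) := by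
  set v := γ⁻¹ • (Q⁻¹ *ᵥ x)
  have hQv : Q *ᵥ v = γ⁻¹ • x := by
    rw [mulVec_smul, mulVec_mulVec, mul_nonsing_inv _ hQ, one_mulVec]
  have hvx : v ⬝ᵥ x = γ⁻¹ * (x ⬝ᵥ (Q⁻¹ *ᵥ x)) := by
    rw [smul_dotProduct, smul_eq_mul, dotProduct_comm]
  have hvQv : v ⬝ᵥ (Q *ᵥ v) = γ⁻¹ * (v ⬝ᵥ x) := by
    rw [hQv, dotProduct_smul, smul_eq_mul]
  have key := (hP.two_mul_dotProduct_sub_le x v).trans' (sub_le_sub_left (hPQ v) _)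
  rw [hvQv, hvx] at key
  calc x ⬝ᵥ (Q⁻¹ *ᵥ x)
      = γ * (2 * (γ⁻¹ * (x ⬝ᵥ (Q⁻¹ *ᵥ x))) - γ * (γ⁻¹ * (γ⁻¹ * (x ⬝ᵥ (Q⁻¹ *ᵥ x))))) := by
        field_simp; ring
    _ ≤ γ * (x ⬝ᵥ (P⁻¹ *ᵥ x)) := by gcongr

variable [Fintype ι] [DecidableEq ι]

noncomputable def gramInvForm (A : Matrix ι m ℝ) (s : ι → ℝ) (i : ι) : ℝ :=
  A i ⬝ᵥ ((Aᵀ * diagonal s * A)⁻¹ *ᵥ A i)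

variable {A : Matrix ι m ℝ} {s s' : ι → ℝ} {γ : ℝ}

theorem gramInvForm_le_mul (hA : Function.Injective A.mulVec) (hs : ∀ j, 0 < s j)
    (hs' : ∀ j, 0 < s' j) (hγ : 0 < γ) (h : ∀ j, s j ≤ γ * s' j) (i : ι) :
    gramInvForm A s' i ≤ γ * gramInvForm A s i := by
  refine (posDef_transpose_mul_diagonal_mul_s17 hA hs).dotProduct_inv_mulVec_le
    (posDef_transpose_mul_diagonal_mul_s17 hA hs').det_pos.ne'.isUnit hγ (fun v => ?_) (A i)
  simp only [dotProduct_transpose_mul_diagonal_mul_mulVec_s17, Finset.mul_sum, ← mul_assoc]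
  gcongr with j
  exact h j

theorem mulApprox_gramInvForm (hA : Function.Injective A.mulVec) (hs : ∀ j, 0 < s j)
    (hs' : ∀ j, 0 < s' j) (hγ : 0 < γ) (h : ∀ j, MulApprox γ (s j) (s' j)) (i : ι) :
    MulApprox γ (gramInvForm A s i) (gramInvForm A s' i) :=
  (MulApprox.iff_le_mul hγ).2
    ⟨gramInvForm_le_mul hA hs' hs hγ (fun j => ((MulApprox.iff_le_mul hγ).1 (h j)).2) i,
      gramInvForm_le_mul hA hs hs' hγ (fun j => ((MulApprox.iff_le_mul hγ).1 (h j)).1) i⟩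

end GramInverse

theorem levScore_diagonal_mul {n d : ℕ} (A : Matrix (Fin n) (Fin d) ℝ) (s : Fin n → ℝ)
    (i : Fin n) : levScore (diagonal s * A) i = s i ^ 2 * gramInvForm A (fun j => s j ^ 2) i := by
  have hgram : (diagonal s * A)ᵀ * (diagonal s * A) = Aᵀ * diagonal (fun j => s j ^ 2) * A := by
    simp only [transpose_mul, diagonal_transpose, Matrix.mul_assoc,
      ← Matrix.mul_assoc (diagonal s), diagonal_mul_diagonal, sq]
  have hrow : (diagonal s * A) i = s i • A i := by
    ext j; simp [diagonal_mul]
  rw [levScore, gramInvForm, hgram, hrow, mulVec_smul, dotProduct_smul, smul_dotProduct,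
    smul_eq_mul, smul_eq_mul, sq, mul_assoc]

theorem levScore_diagonal_rpow_mul {n d : ℕ} (A : Matrix (Fin n) (Fin d) ℝ) {x : Fin n → ℝ}
    (hx : ∀ j, 0 < x j) (e : ℝ) (i : Fin n) :
    levScore (diagonal (fun j => x j ^ e) * A) i
      = x i ^ (2 * e) * gramInvForm A (fun j => x j ^ (2 * e)) i := by
  have hsq : ∀ j, (x j ^ e) ^ 2 = x j ^ (2 * e) := fun j => by
    rw [← Real.rpow_natCast, ← Real.rpow_mul (hx j).le, Nat.cast_ofNat, mul_comm]
  simp only [levScore_diagonal_mul, hsq]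

theorem Real.rpow_mul_rpow_neg_mul {x : ℝ} (hx : 0 < x) (t y : ℝ) : x ^ t * (x ^ (-t) * y) = y := by
  rw [← mul_assoc, ← Real.rpow_add hx, add_neg_cancel, Real.rpow_zero, one_mul]

theorem mulApprox_rpow_mul_levScore {n d : ℕ} {A : Matrix (Fin n) (Fin d) ℝ} (hA : A.rank = d)
    {x y : Fin n → ℝ} (hx : ∀ j, 0 < x j) (hy : ∀ j, 0 < y j) {ν : ℝ} (hν : 0 < ν)
    (hxy : ∀ j, MulApprox ν (x j) (y j)) {e : ℝ} (he : e ≤ 0) (i : Fin n) :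
    MulApprox (ν ^ (-(2 * e)))
      (x i ^ (-(2 * e)) * levScore (diagonal (fun j => x j ^ e) * A) i)
      (y i ^ (-(2 * e)) * levScore (diagonal (fun j => y j ^ e) * A) i) := by
  set t := -(2 * e)
  have ht : 0 ≤ t := by linarith
  have hweights : ∀ j, MulApprox (ν ^ t) (x j ^ (-t)) (y j ^ (-t)) := fun j => by
    rw [Real.rpow_neg (hx j).le, Real.rpow_neg (hy j).le]
    exact ((hxy j).rpow hν.le (hx j).le ht).inv (Real.rpow_pos_of_pos hν t)
      (Real.rpow_pos_of_pos (hx j) t) (Real.rpow_pos_of_pos (hy j) t)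
  rw [levScore_diagonal_rpow_mul A hx, levScore_diagonal_rpow_mul A hy, ← neg_neg (2 * e),
    Real.rpow_mul_rpow_neg_mul (hx i), Real.rpow_mul_rpow_neg_mul (hy i)]
  exact mulApprox_gramInvForm (A.mulVec_injective_of_rank_eq_card_s17 (by simpa using hA))
    (fun j => Real.rpow_pos_of_pos (hx j) _) (fun j => Real.rpow_pos_of_pos (hy j) _)
    (Real.rpow_pos_of_pos hν t) hweights i

theorem stmt17_general {n d : ℕ} (A : Matrix (Fin n) (Fin d) ℝ) (hA : A.rank = d)
    (q : ℝ) (hq1 : 1 ≤ q) (hq2 : q ≤ 2)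
    (c : Fin n → ℝ) (hc : ∀ i, 0 ≤ c i)
    (w : Fin n → ℝ) (hcw : ∀ i, 0 < c i + w i)
    (hfix : ∀ i, w i =
      levScore (Matrix.diagonal (fun j => (c j + w j) ^ ((1:ℝ)/2 - 1/q)) * A) i)
    (u : Fin n → ℝ) (hcu : ∀ i, 0 < c i + u i)
    (ν : ℝ) (hν : 1 ≤ ν)
    (happrox : ∀ i, ν⁻¹ * (c i + w i) ≤ c i + u i ∧ c i + u i ≤ ν * (c i + w i))
    (σt : Fin n → ℝ)
    (hσt : ∀ i,
      (50/51 : ℝ) * levScore (Matrix.diagonal (fun j => (c j + u j) ^ ((1:ℝ)/2 - 1/q)) * A) i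
        ≤ σt i ∧
      σt i ≤
        (51/50 : ℝ) * levScore (Matrix.diagonal (fun j => (c j + u j) ^ ((1:ℝ)/2 - 1/q)) * A) i)
    (unew : Fin n → ℝ)
    (hunew : ∀ i, unew i =
      ((c i + u i) ^ (2/q - 1) * σt i + (c i + u i) ^ (2/q - 1) * c i) ^ (q/2) - c i)
    (μ : ℝ) (hμ : μ = (51/50 : ℝ) ^ (q/2) * ν ^ (1 - q/2)) :
    ∀ i, μ⁻¹ * (c i + w i) ≤ c i + unew i ∧ c i + unew i ≤ μ * (c i + w i) := by
  intro i
  have hq : 0 < q := by linarith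
  set t := 2 / q - 1
  have ht : 0 ≤ t := by rw [sub_nonneg, le_div_iff₀ hq]; linarith
  have hν0 : 0 < ν := by linarith
  have happrox' : ∀ j, MulApprox ν (c j + w j) (c j + u j) := happrox
  have hlev := mulApprox_rpow_mul_levScore hA hcw hcu hν0 happrox'
    (sub_nonpos.2 (one_div_le_one_div_of_le hq hq2)) i
  rw [← hfix i, show -(2 * ((1:ℝ)/2 - 1/q)) = t by ring] at hlev
  have hσ : MulApprox (51/50) _ (σt i) :=
    ⟨by rw [show (51/50 : ℝ)⁻¹ = 50/51 by norm_num]; exact (hσt i).1, (hσt i).2⟩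
  have hterm1 := hlev.trans (by norm_num) (hσ.mul_left (Real.rpow_nonneg (hcu i).le t))
  have hterm2 : MulApprox (ν ^ t * (51/50)) ((c i + w i) ^ t * c i) ((c i + u i) ^ t * c i) :=
    (((happrox' i).rpow hν0.le (hcw i).le ht).mul_right (hc i)).mono
      (Real.rpow_pos_of_pos hν0 t) (by linarith [Real.rpow_pos_of_pos hν0 t])
      (mul_nonneg (Real.rpow_nonneg (hcw i).le t) (hc i))
  have hsum := hterm1.add hterm2
  rw [← mul_add, add_comm (w i), ← Real.rpow_add_one (hcw i).ne'] at hsum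
  have hpow := hsum.rpow (by positivity) (Real.rpow_nonneg (hcw i).le _) (by linarith : 0 ≤ q / 2)
  have hexp : (t + 1) * (q / 2) = 1 := by simp only [t]; field_simp; ring
  have hexp' : t * (q / 2) = 1 - q / 2 := by simp only [t]; field_simp
  rw [← Real.rpow_mul (hcw i).le, hexp, Real.rpow_one, Real.mul_rpow (by positivity) (by norm_num),
    ← Real.rpow_mul hν0.le, hexp', mul_comm, ← hμ] at hpow
  rwa [hunew i, add_sub_cancel]

theorem stmt17 {n d : ℕ} (A : Matrix (Fin n) (Fin d) ℝ) (hA : A.rank = d)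
    (q : ℝ) (hq1 : 1 ≤ q) (hq2 : q ≤ 2)
    (c : Fin n → ℝ) (hc : ∀ i, 0 ≤ c i)
    (w : Fin n → ℝ) (hw0 : ∀ i, 0 ≤ w i) (hcw : ∀ i, 0 < c i + w i)
    (hfix : ∀ i, w i =
      levScore (Matrix.diagonal (fun j => (c j + w j) ^ ((1:ℝ)/2 - 1/q)) * A) i)
    (u : Fin n → ℝ) (hu0 : ∀ i, 0 ≤ u i) (hcu : ∀ i, 0 < c i + u i)
    (ν : ℝ) (hν : 1 ≤ ν)
    (happrox : ∀ i, ν⁻¹ * (c i + w i) ≤ c i + u i ∧ c i + u i ≤ ν * (c i + w i))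
    (σt : Fin n → ℝ)
    (hσt : ∀ i,
      (50/51 : ℝ) * levScore (Matrix.diagonal (fun j => (c j + u j) ^ ((1:ℝ)/2 - 1/q)) * A) i
        ≤ σt i ∧
      σt i ≤
        (51/50 : ℝ) * levScore (Matrix.diagonal (fun j => (c j + u j) ^ ((1:ℝ)/2 - 1/q)) * A) i)
    (unew : Fin n → ℝ)
    (hunew : ∀ i, unew i =
      ((c i + u i) ^ (2/q - 1) * σt i + (c i + u i) ^ (2/q - 1) * c i) ^ (q/2) - c i)
    (μ : ℝ) (hμ : μ = (51/50 : ℝ) ^ (q/2) * ν ^ (1 - q/2)) :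
    ∀ i, μ⁻¹ * (c i + w i) ≤ c i + unew i ∧ c i + unew i ≤ μ * (c i + w i) :=
  stmt17_general A hA q hq1 hq2 c hc w hcw hfix u hcu ν hν happrox σt hσt unew hunew μ hμ
end
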